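/- For every {→}-calculus P₀, every nonempty word ξ over 𝒜, and every natural number n with n ≤ N_ξ, one has ⟨P_{T,P₀,ξ}⟩_n ⊆ P_{T,P₀}* ∪ T_ξ*: every formula obtainable from P_{T,P₀,ξ} in at most n one-step inferences is a substitution instance of an axiom of P_{T,P₀} or of a formula in T_ξ. -/
import Mathlib


namespace PC

/-- `{→}`-formulas over a countably infinite set of propositional variables. -/
inductive Fml : Type where
  | var : ℕ → Fml
  | imp : Fml → Fml → Fml
deriving DecidableEq

namespace Fml

/-- Application of a substitution to a formula. -/
def subst (σ : ℕ → Fml) : Fml → Fml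
  | var n => σ n
  | imp A B => imp (subst σ A) (subst σ B)

/-- The set of variables of a formula. -/
def fvars : Fml → Finset ℕ
  | var n => {n}
  | imp A B => fvars A ∪ fvars B

/-- Derivability from a set of axioms by modus ponens and substitution. -/
inductive Deriv (P : Set Fml) : Fml → Prop
  | ax {A : Fml} : A ∈ P → Deriv P A
  | mp {A B : Fml} : Deriv P A → Deriv P (imp A B) → Deriv P B
  | sub {A : Fml} (σ : ℕ → Fml) : Deriv P A → Deriv P (subst σ A)

end Fml

/-- `B̂`: the result of substituting `B` for the variable `x` (= `var 0`) in `x̂`. -/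
def hat (xhat B : Fml) : Fml := Fml.subst (fun n => if n = 0 then B else Fml.var n) xhat

/-- `A ∘ B := ((B̂ → B̂) → B̂) → (Â → ((B̂ → B̂) → B̂))`. -/
def circ (xhat A B : Fml) : Fml :=
  .imp (.imp (.imp (hat xhat B) (hat xhat B)) (hat xhat B))
    (.imp (hat xhat A) (.imp (.imp (hat xhat B) (hat xhat B)) (hat xhat B)))

/-- `A · B := ((A → A) → A) ∘ B`. -/
def dot (xhat A B : Fml) : Fml := circ xhat (.imp (.imp A A) A) B

/-- `Cform i` is the formula `p → (p → … (p → p))` with `i` antecedents `p`,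
where `p := var 0`. -/
def Cform : ℕ → Fml
  | 0 => .var 0
  | n + 1 => .imp (.var 0) (Cform n)

/-- The code of the letter `aᵢ` (letters of the alphabet `𝒜 = {a₁, …, a_m}` are the
elements of `Fin m`, the letter `a : Fin m` standing for `a_{a+1}`): `Cᵢ ∘ p`. -/
def letterCode (xhat : Fml) {m : ℕ} (a : Fin m) : Fml :=
  circ xhat (Cform (a.val + 1)) (.var 0)

/-- Formal alphabetic-formula trees over the alphabet `Fin m`. -/
inductive ATree (m : ℕ) : Type where
  | leaf : Fin m → ATree m
  | node : ATree m → ATree m → ATree m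

/-- The word associated with an alphabetic formula. -/
def ATree.word {m : ℕ} : ATree m → List (Fin m)
  | .leaf a => [a]
  | .node l r => l.word ++ r.word

/-- The `{→}`-formula denoted by an alphabetic-formula tree. -/
def ATree.toFml {m : ℕ} (xhat : Fml) : ATree m → Fml
  | .leaf a => letterCode xhat a
  | .node l r => dot xhat (l.toFml xhat) (r.toFml xhat)

/-- `A` is an alphabetic formula (an `𝒜`-formula). -/
def IsAForm (m : ℕ) (xhat : Fml) (A : Fml) : Prop := ∃ t : ATree m, t.toFml xhat = A

/-- The code `͞α` of a word `α`: the set of all `𝒜`-formulas `A` with `word(A) = α`. -/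
def codeSet {m : ℕ} (xhat : Fml) (α : List (Fin m)) : Set Fml :=
  { A | ∃ t : ATree m, t.word = α ∧ t.toFml xhat = A }

/-- `A*`: the set of substitution instances of `A`. -/
def Inst (A : Fml) : Set Fml := { B | ∃ σ, Fml.subst σ A = B }

/-- `M*`: the set of substitution instances of members of `M`. -/
def InstSet (M : Set Fml) : Set Fml := { B | ∃ A ∈ M, ∃ σ, Fml.subst σ A = B }

/-- A tag system over the alphabet `Fin m`: the words `ω₁, …, ω_m` and the
deletion number `d`. -/
structure TagSystem (m : ℕ) where
  W : Fin m → List (Fin m)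
  d : ℕ

/-- One-step production: `ξ ↦_T ζ` iff `ξ = aᵢβγ` with `|β| = d − 1` and `ζ = γωᵢ`. -/
def TagStep {m : ℕ} (T : TagSystem m) (ξ ζ : List (Fin m)) : Prop :=
  ∃ (i : Fin m) (β γ : List (Fin m)),
    β.length = T.d - 1 ∧ ξ = i :: (β ++ γ) ∧ ζ = γ ++ T.W i

/-- `ξ ⟾_T ζ`: reflexive-transitive closure of one-step production. -/
def TagProd {m : ℕ} (T : TagSystem m) : List (Fin m) → List (Fin m) → Prop :=
  Relation.ReflTransGen (TagStep T)

/-- `T` halts on `ξ`. -/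
def TagHalts {m : ℕ} (T : TagSystem m) (ξ : List (Fin m)) : Prop :=
  ∃ ζ, TagProd T ξ ζ ∧ ζ.length < T.d

/-- The variables `x, y, z, u` used in the axiom schemes. -/
def Xv : Fml := .var 1
def Yv : Fml := .var 2
def Zv : Fml := .var 3
def Uv : Fml := .var 4

/-- The axioms (R₁)–(R₄). -/
def Raxioms (xhat : Fml) : Set Fml :=
  { .imp (dot xhat Xv (dot xhat Yv Zv)) (dot xhat (dot xhat Xv Yv) Zv),
    .imp (dot xhat (dot xhat Xv Yv) Zv) (dot xhat Xv (dot xhat Yv Zv)),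
    .imp (dot xhat (dot xhat Xv (dot xhat Yv Zv)) Uv)
      (dot xhat (dot xhat (dot xhat Xv Yv) Zv) Uv),
    .imp (dot xhat (dot xhat (dot xhat Xv Yv) Zv) Uv)
      (dot xhat (dot xhat Xv (dot xhat Yv Zv)) Uv) }

/-- The axioms (T₁) and (T₂) of `P_T`. -/
def Taxioms {m : ℕ} (xhat : Fml) (T : TagSystem m) : Set Fml :=
  { F | ∃ (i : Fin m) (α : List (Fin m)) (A B : Fml),
      α.length = T.d - 1 ∧ A ∈ codeSet xhat (i :: α) ∧ B ∈ codeSet xhat (T.W i) ∧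
      (F = .imp (dot xhat A Xv) (dot xhat Xv B) ∨ F = .imp A B) }

/-- The calculus `P_T`. -/
def PT {m : ℕ} (xhat : Fml) (T : TagSystem m) : Set Fml := Taxioms xhat T ∪ Raxioms xhat

/-- `P ⊢ A ⇒ B`: there are `C₀ = A, …, C_n = B` with `P ⊢ Cᵢ → Cᵢ₊₁` for all `i`. -/
def DChain (P : Set Fml) : Fml → Fml → Prop :=
  Relation.ReflTransGen (fun C D => Fml.Deriv P (.imp C D))

/-- `T_α`: the set of `𝒜`-formulas `A` with `α ⟾_T word(A)`. -/
def Tset {m : ℕ} (xhat : Fml) (T : TagSystem m) (α : List (Fin m)) : Set Fml :=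
  { A | ∃ t : ATree m, t.toFml xhat = A ∧ TagProd T α t.word }

/-- The halting-condition axioms (H) for the calculus `P₀`. -/
def Haxioms {m : ℕ} (xhat : Fml) (T : TagSystem m) (P₀ : Finset Fml) : Set Fml :=
  { F | ∃ (α : List (Fin m)) (A B : Fml), α ≠ [] ∧ α.length < T.d ∧
      A ∈ codeSet xhat α ∧ B ∈ P₀ ∧ F = .imp A B }

/-- The calculus `P_{T,P₀}`. -/
def PTP0 {m : ℕ} (xhat : Fml) (T : TagSystem m) (P₀ : Finset Fml) : Set Fml :=
  PT xhat T ∪ Haxioms xhat T P₀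

/-- The calculus `P_{T,P₀,ξ}`. -/
def PTP0xi {m : ℕ} (xhat : Fml) (T : TagSystem m) (P₀ : Finset Fml)
    (ξ : List (Fin m)) : Set Fml :=
  PT xhat T ∪ Haxioms xhat T P₀ ∪ codeSet xhat ξ

/-- `⟨P⟩`: formulas obtained from `P` by one application of modus ponens or
substitution. -/
def stepOnce (P : Set Fml) : Set Fml :=
  { B | ∃ A, A ∈ P ∧ Fml.imp A B ∈ P } ∪ { B | ∃ A ∈ P, ∃ σ, Fml.subst σ A = B }

/-- `⟨P⟩_n`. -/
def stepIter (P : Set Fml) : ℕ → Set Fml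
  | 0 => P
  | n + 1 => stepOnce (stepIter P n)

/-- The single axiom `x → (y → x)`. -/
def Kax : Fml := .imp (.var 0) (.imp (.var 1) (.var 0))

/-- An effective encoding of `{→}`-formulas as natural numbers. -/
def encFml : Fml → ℕ
  | .var n => Nat.pair 0 n
  | .imp A B => Nat.pair 1 (Nat.pair (encFml A) (encFml B))

/-- The fixed effective encoding of `{→}`-calculi (finite sets of formulas)
as natural numbers. -/
def encCalc (P : Finset Fml) : ℕ :=
  Encodable.encode ((P.image encFml).sort (· ≤ ·))


/-- `⟨P⟩_n` contains a substitution instance of an element of the code of some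
nonempty word `ζ` with `|ζ| < d`. -/
def ShortAt {m : ℕ} (xhat : Fml) (T : TagSystem m) (P : Set Fml) (n : ℕ) : Prop :=
  ∃ ζ : List (Fin m), ζ ≠ [] ∧ ζ.length < T.d ∧
    ∃ A ∈ codeSet xhat ζ, ∃ σ : ℕ → Fml, Fml.subst σ A ∈ stepIter P n

/-- `N_ξ ∈ ℕ ∪ {∞}`: the least `n` such that a substitution instance of an element
of the code of some nonempty word `ζ` with `|ζ| < d` lies in `⟨P_{T,P₀,ξ}⟩_n`
(and `∞` if there is no such `n`). -/
noncomputable def Nxi {m : ℕ} (xhat : Fml) (T : TagSystem m) (P₀ : Finset Fml)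
    (ξ : List (Fin m)) : ℕ∞ :=
  sInf { e : ℕ∞ | ∃ n : ℕ, e = (n : ℕ∞) ∧ ShortAt xhat T (PTP0xi xhat T P₀ ξ) n }


/-! ### Auxiliary lemmas -/

namespace Fml

/-- Size of a formula. -/
def fsize : Fml → ℕ
  | .var _ => 1
  | .imp A B => fsize A + fsize B + 1

lemma subst_subst (σ τ : ℕ → Fml) (F : Fml) :
    subst σ (subst τ F) = subst (fun n => subst σ (τ n)) F := by
  induction F with
  | var n => rfl
  | imp A B ihA ihB => simp [subst, ihA, ihB]

lemma subst_var (F : Fml) : subst var F = F := by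
  induction F with
  | var n => rfl
  | imp A B ihA ihB => simp [subst, ihA, ihB]

lemma subst_congr {σ τ : ℕ → Fml} {F : Fml} (h : ∀ n ∈ F.fvars, σ n = τ n) :
    subst σ F = subst τ F := by
  induction F with
  | var n => exact h n (by simp [fvars])
  | imp A B ihA ihB =>
      simp only [subst, imp.injEq]
      exact ⟨ihA fun n hn => h n (by simp [fvars, hn]),
             ihB fun n hn => h n (by simp [fvars, hn])⟩

lemma fvars_subst_subset (σ : ℕ → Fml) (F : Fml) :
    (subst σ F).fvars ⊆ F.fvars.biUnion fun n => (σ n).fvars := by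
  induction F with
  | var n => simp [subst, fvars]
  | imp A B ihA ihB =>
      intro x hx
      simp only [subst, fvars, Finset.mem_union] at hx
      simp only [fvars, Finset.mem_biUnion, Finset.mem_union]
      rcases hx with h | h
      · obtain ⟨a, ha, hb⟩ := Finset.mem_biUnion.mp (ihA h)
        exact ⟨a, Or.inl ha, hb⟩
      · obtain ⟨a, ha, hb⟩ := Finset.mem_biUnion.mp (ihB h)
        exact ⟨a, Or.inr ha, hb⟩

end Fml

lemma subst_hat {xhat : Fml} (hx : xhat.fvars = {0}) (σ : ℕ → Fml) (B : Fml) :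
    Fml.subst σ (hat xhat B) = hat xhat (Fml.subst σ B) := by
  unfold hat
  rw [Fml.subst_subst]
  apply Fml.subst_congr
  intro n hn
  rw [hx] at hn
  simp only [Finset.mem_singleton] at hn
  subst hn
  simp

lemma subst_circ {xhat : Fml} (hx : xhat.fvars = {0}) (σ : ℕ → Fml) (A B : Fml) :
    Fml.subst σ (circ xhat A B) = circ xhat (Fml.subst σ A) (Fml.subst σ B) := by
  simp [circ, Fml.subst, subst_hat hx]

lemma dot_eq_circ (xhat A B : Fml) :
    dot xhat A B = circ xhat (.imp (.imp A A) A) B := rfl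

lemma subst_dot {xhat : Fml} (hx : xhat.fvars = {0}) (σ : ℕ → Fml) (A B : Fml) :
    Fml.subst σ (dot xhat A B) = dot xhat (Fml.subst σ A) (Fml.subst σ B) := by
  rw [dot_eq_circ, dot_eq_circ, subst_circ hx]
  rfl

lemma hat_upd_inj {B C : Fml} : ∀ F : Fml, 0 ∈ F.fvars →
    Fml.subst (fun n => if n = 0 then B else .var n) F =
      Fml.subst (fun n => if n = 0 then C else .var n) F → B = C
  | .var n, h, e => by
      simp only [Fml.fvars, Finset.mem_singleton] at h
      subst h
      simpa [Fml.subst] using e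
  | .imp F G, h, e => by
      simp only [Fml.fvars, Finset.mem_union] at h
      injection e with e1 e2
      rcases h with h | h
      · exact hat_upd_inj F h e1
      · exact hat_upd_inj G h e2

lemma hat_inj {xhat : Fml} (hx : xhat.fvars = {0}) {B C : Fml}
    (h : hat xhat B = hat xhat C) : B = C :=
  hat_upd_inj xhat (by simp [hx]) h

lemma circ_inj {xhat : Fml} (hx : xhat.fvars = {0}) {A B A' B' : Fml}
    (h : circ xhat A B = circ xhat A' B') : A = A' ∧ B = B' := by
  simp only [circ, Fml.imp.injEq] at h
  exact ⟨hat_inj hx h.2.1, hat_inj hx h.1.2⟩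

lemma dot_inj {xhat : Fml} (hx : xhat.fvars = {0}) {A B A' B' : Fml}
    (h : dot xhat A B = dot xhat A' B') : A = A' ∧ B = B' := by
  rw [dot_eq_circ, dot_eq_circ] at h
  obtain ⟨h1, h2⟩ := circ_inj hx h
  injection h1 with h3 h4
  exact ⟨h4, h2⟩

lemma fvars_hat_subset {xhat : Fml} (hx : xhat.fvars = {0}) (B : Fml) :
    (hat xhat B).fvars ⊆ B.fvars := by
  intro k hk
  have h := Fml.fvars_subst_subset _ xhat hk
  rw [hx] at h
  simp only [Finset.mem_biUnion, Finset.mem_singleton] at h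
  obtain ⟨a, rfl, h⟩ := h
  simpa using h

lemma fvars_circ_subset {xhat : Fml} (hx : xhat.fvars = {0}) (A B : Fml) :
    (circ xhat A B).fvars ⊆ A.fvars ∪ B.fvars := by
  have hA := fvars_hat_subset hx A
  have hB := fvars_hat_subset hx B
  simp only [circ, Fml.fvars]
  intro k hk
  simp only [Finset.mem_union] at hk ⊢
  rcases hk with ((h | h) | h) | (h | ((h | h) | h)) <;>
    first
      | exact Or.inr (hB h)
      | exact Or.inl (hA h)

lemma fvars_Cform : ∀ k, (Cform k).fvars ⊆ {0}
  | 0 => by simp [Cform, Fml.fvars]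
  | k + 1 => by
      simp only [Cform, Fml.fvars]
      exact Finset.union_subset (by simp [Fml.fvars]) (fvars_Cform k)

lemma fvars_toFml {xhat : Fml} (hx : xhat.fvars = {0}) {m : ℕ} :
    ∀ t : ATree m, (t.toFml xhat).fvars ⊆ {0}
  | .leaf a => by
      simp only [ATree.toFml, letterCode]
      refine (fvars_circ_subset hx _ _).trans ?_
      exact Finset.union_subset (fvars_Cform _) (by simp [Fml.fvars])
  | .node l r => by
      simp only [ATree.toFml, dot_eq_circ]
      refine (fvars_circ_subset hx _ _).trans
        (Finset.union_subset ?_ (fvars_toFml hx r))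
      simp only [Fml.fvars]
      exact Finset.union_subset
        (Finset.union_subset (fvars_toFml hx l) (fvars_toFml hx l)) (fvars_toFml hx l)

lemma toFml_circ {xhat : Fml} {m : ℕ} (t : ATree m) :
    ∃ X C, t.toFml xhat = circ xhat X C := by
  cases t with
  | leaf a => exact ⟨Cform (a.val + 1), .var 0, rfl⟩
  | node l r =>
      exact ⟨.imp (.imp (l.toFml xhat) (l.toFml xhat)) (l.toFml xhat), r.toFml xhat, rfl⟩

/-- A formula of the shape `P → (Q → P)`. -/
def CircLike (G : Fml) : Prop := ∃ P Q, G = .imp P (.imp Q P)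

lemma circ_circLike (xhat A B : Fml) : CircLike (circ xhat A B) := ⟨_, _, rfl⟩

lemma cform_inst_inj : ∀ (a b : ℕ) (σ τ : ℕ → Fml), σ 0 = τ 0 →
    Fml.subst σ (Cform a) = Fml.subst τ (Cform b) → a = b
  | 0, 0, _, _, _, _ => rfl
  | 0, b + 1, σ, τ, h0, h => by
      simp only [Cform, Fml.subst] at h
      rw [h0] at h
      have := congrArg Fml.fsize h
      simp only [Fml.fsize] at this
      omega
  | a + 1, 0, σ, τ, h0, h => by
      simp only [Cform, Fml.subst] at h
      rw [h0] at h
      have := congrArg Fml.fsize h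
      simp only [Fml.fsize] at this
      omega
  | a + 1, b + 1, σ, τ, h0, h => by
      simp only [Cform, Fml.subst] at h
      injection h with h1 h2
      exact congrArg Nat.succ (cform_inst_inj a b σ τ h0 h2)

lemma leaf_ne_dot {xhat : Fml} (hx : xhat.fvars = {0}) {m : ℕ} (a : Fin m)
    (σ : ℕ → Fml) (E F : Fml) :
    Fml.subst σ (letterCode xhat a) ≠ dot xhat E F := by
  intro h
  rw [letterCode, subst_circ hx, dot_eq_circ] at h
  obtain ⟨h1, h2⟩ := circ_inj hx h
  simp only [Cform, Fml.subst] at h1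
  injection h1 with hc hE
  cases hav : a.val with
  | zero =>
      rw [hav] at hE
      simp only [Cform, Fml.subst] at hE
      rw [hc] at hE
      have := congrArg Fml.fsize hE
      simp only [Fml.fsize] at this
      omega
  | succ k =>
      rw [hav] at hE
      simp only [Cform, Fml.subst] at hE
      rw [hc] at hE
      have := congrArg Fml.fsize hE
      simp only [Fml.fsize] at this
      omega

lemma rigid {xhat : Fml} (hx : xhat.fvars = {0}) {m : ℕ} :
    ∀ (t t' : ATree m) (σ τ : ℕ → Fml),
      Fml.subst σ (t.toFml xhat) = Fml.subst τ (t'.toFml xhat) →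
      t.word = t'.word ∧ σ 0 = τ 0
  | .leaf a, .leaf b, σ, τ, h => by
      simp only [ATree.toFml, letterCode] at h
      rw [subst_circ hx, subst_circ hx] at h
      obtain ⟨h1, h2⟩ := circ_inj hx h
      have h0 : σ 0 = τ 0 := h2
      have hab : a = b := Fin.ext (by have := cform_inst_inj _ _ _ _ h0 h1; omega)
      exact ⟨by rw [hab], h0⟩
  | .leaf a, .node l r, σ, τ, h => by
      exfalso
      simp only [ATree.toFml] at h
      rw [subst_dot hx] at h
      exact leaf_ne_dot hx a σ _ _ h
  | .node l r, .leaf b, σ, τ, h => by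
      exfalso
      simp only [ATree.toFml] at h
      rw [subst_dot hx] at h
      exact leaf_ne_dot hx b τ _ _ h.symm
  | .node l r, .node l' r', σ, τ, h => by
      simp only [ATree.toFml] at h
      rw [subst_dot hx, subst_dot hx] at h
      obtain ⟨h1, h2⟩ := dot_inj hx h
      obtain ⟨hw1, h01⟩ := rigid hx l l' σ τ h1
      obtain ⟨hw2, _⟩ := rigid hx r r' σ τ h2
      exact ⟨by simp [ATree.word, hw1, hw2], h01⟩

lemma PTP0_inst_shape {xhat : Fml} (hx : xhat.fvars = {0}) {m : ℕ}
    (T : TagSystem m) (P₀ : Finset Fml) {G : Fml}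
    (hG : G ∈ InstSet (PTP0 xhat T P₀)) :
    ∃ C₁ C₂, G = .imp C₁ C₂ ∧ CircLike C₁ := by
  obtain ⟨F, hF, σ, rfl⟩ := hG
  rcases hF with (hF | hF) | hF
  · obtain ⟨i, α, A, B, hlen, ⟨v, hvw, rfl⟩, ⟨w, hww, rfl⟩, hor | hor⟩ := hF
    · subst hor
      refine ⟨_, _, rfl, ?_⟩
      rw [subst_dot hx, dot_eq_circ]
      exact circ_circLike _ _ _
    · subst hor
      obtain ⟨X, C, hvc⟩ := toFml_circ (xhat := xhat) v
      refine ⟨_, _, rfl, ?_⟩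
      rw [hvc, subst_circ hx]
      exact circ_circLike _ _ _
  · simp only [Raxioms, Set.mem_insert_iff, Set.mem_singleton_iff] at hF
    rcases hF with rfl | rfl | rfl | rfl <;>
      · refine ⟨_, _, rfl, ?_⟩
        rw [subst_dot hx, dot_eq_circ]
        exact circ_circLike _ _ _
  · obtain ⟨α, A, B, _, _, ⟨v, hvw, rfl⟩, _, rfl⟩ := hF
    obtain ⟨X, C, hvc⟩ := toFml_circ (xhat := xhat) v
    refine ⟨_, _, rfl, ?_⟩
    rw [hvc, subst_circ hx]
    exact circ_circLike _ _ _

lemma not_axinst_of_circ {xhat : Fml} (hx : xhat.fvars = {0}) {m : ℕ}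
    (T : TagSystem m) (P₀ : Finset Fml) {X C : Fml} {σ : ℕ → Fml} :
    Fml.subst σ (circ xhat X C) ∉ InstSet (PTP0 xhat T P₀) := by
  intro h
  obtain ⟨C₁, C₂, hEq, hC⟩ := PTP0_inst_shape hx T P₀ h
  rw [subst_circ hx] at hEq
  simp only [circ] at hEq
  injection hEq with h1 h2
  rw [← h1] at hC
  obtain ⟨P, Q, hPQ⟩ := hC
  injection hPQ with e1 e2
  rw [← e1] at e2
  have := congrArg Fml.fsize e2
  simp only [Fml.fsize] at this
  omega

lemma bad_not_mem {xhat : Fml} (hx : xhat.fvars = {0}) {m : ℕ}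
    (T : TagSystem m) (P₀ : Finset Fml) (ξ : List (Fin m)) (S : Fml)
    (h : Fml.imp (.imp S S) S ∈ InstSet (PTP0 xhat T P₀) ∪ InstSet (Tset xhat T ξ)) :
    False := by
  rcases h with h | h
  · obtain ⟨C₁, C₂, hEq, hC⟩ := PTP0_inst_shape hx T P₀ h
    injection hEq with h1 h2
    rw [← h1] at hC
    obtain ⟨P, Q, hPQ⟩ := hC
    injection hPQ with e1 e2
    rw [← e1] at e2
    have := congrArg Fml.fsize e2
    simp only [Fml.fsize] at this
    omega
  · obtain ⟨G, ⟨t, rfl, _⟩, σ, hs⟩ := h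
    obtain ⟨X, C, hc⟩ := toFml_circ (xhat := xhat) t
    rw [hc, subst_circ hx] at hs
    simp only [circ] at hs
    injection hs with h1 h2
    injection h1 with h3 h4
    rw [← h4] at h3
    have := congrArg Fml.fsize h3
    simp only [Fml.fsize] at this
    omega

lemma dot_decomp {xhat : Fml} (hx : xhat.fvars = {0}) {m : ℕ}
    (T : TagSystem m) (P₀ : Finset Fml) (ξ : List (Fin m)) {E F : Fml}
    (h : dot xhat E F ∈ InstSet (PTP0 xhat T P₀) ∪ InstSet (Tset xhat T ξ)) :
    ∃ (t₁ t₂ : ATree m) (τ : ℕ → Fml), TagProd T ξ (t₁.word ++ t₂.word) ∧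
      Fml.subst τ (t₁.toFml xhat) = E ∧ Fml.subst τ (t₂.toFml xhat) = F := by
  rcases h with h | h
  · exfalso
    have h' : Fml.subst Fml.var (circ xhat (.imp (.imp E E) E) F) ∈
        InstSet (PTP0 xhat T P₀) := by
      rw [Fml.subst_var]
      exact h
    exact not_axinst_of_circ hx T P₀ h'
  · obtain ⟨G, ⟨t, rfl, hprod⟩, σ, hs⟩ := h
    cases t with
    | leaf a => exact absurd hs (leaf_ne_dot hx a σ E F)
    | node l r =>
        rw [ATree.toFml, subst_dot hx] at hs
        obtain ⟨h1, h2⟩ := dot_inj hx hs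
        exact ⟨l, r, σ, hprod, h1, h2⟩


/-- For every `{→}`-calculus `P₀`, every nonempty word `ξ` over
`𝒜`, and every `n ≤ N_ξ`, one has `⟨P_{T,P₀,ξ}⟩_n ⊆ P_{T,P₀}* ∪ T_ξ*`. -/
theorem stepIter_subset (xhat : Fml) (hx : xhat.fvars = {0})
    (m : ℕ) (T : TagSystem m) (hW : ∀ i, T.W i ≠ [])
    (P₀ : Finset Fml) (ξ : List (Fin m)) (hξ : ξ ≠ [])
    (n : ℕ) (hn : (n : ℕ∞) ≤ Nxi xhat T P₀ ξ) :
    stepIter (PTP0xi xhat T P₀ ξ) n ⊆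
      InstSet (PTP0 xhat T P₀) ∪ InstSet (Tset xhat T ξ) := by
  induction n with
  | zero =>
      intro B hB
      rcases hB with (h | h) | h
      · exact Or.inl ⟨B, Or.inl h, Fml.var, Fml.subst_var B⟩
      · exact Or.inl ⟨B, Or.inr h, Fml.var, Fml.subst_var B⟩
      · obtain ⟨t, htw, rfl⟩ := h
        refine Or.inr ⟨_, ⟨t, rfl, ?_⟩, Fml.var, Fml.subst_var _⟩
        rw [htw]
        exact Relation.ReflTransGen.refl
  | succ n IH =>
      have hn' : (n : ℕ∞) ≤ Nxi xhat T P₀ ξ :=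
        le_trans (by exact_mod_cast Nat.le_succ n) hn
      have IH' := IH hn'
      have hshort : ¬ ShortAt xhat T (PTP0xi xhat T P₀ ξ) n := by
        intro hs
        have h1 : Nxi xhat T P₀ ξ ≤ (n : ℕ∞) := sInf_le ⟨n, rfl, hs⟩
        have h2 : ((n + 1 : ℕ) : ℕ∞) ≤ (n : ℕ∞) := le_trans hn h1
        have h3 : n + 1 ≤ n := by exact_mod_cast h2
        omega
      intro B hB
      rcases hB with ⟨A, hAn, hDn⟩ | ⟨A, hAn, σ, rfl⟩
      · -- modus ponens
        have hA := IH' hAn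
        have hD := IH' hDn
        rcases hD with ⟨F, hF, σ, hσ⟩ | hD
        · rcases hF with (hF | hF) | hF
          · -- (T₁) and (T₂)
            obtain ⟨i, α, V, W₀, hlen, ⟨v, hvw, rfl⟩, ⟨w, hww, rfl⟩, hor⟩ := hF
            rcases hor with rfl | rfl
            · -- (T₁)
              injection hσ with eA eB
              simp only [subst_dot hx] at eA eB
              rw [← eA] at hA
              obtain ⟨t₁, t₂, τ, hprod, h1, h2⟩ := dot_decomp hx T P₀ ξ hA
              obtain ⟨hw1, h0⟩ := rigid hx t₁ v τ σ h1
              rw [hvw] at hw1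
              refine Or.inr ⟨_, ⟨ATree.node t₂ w, rfl, ?_⟩, τ, ?_⟩
              · show TagProd T ξ (t₂.word ++ w.word)
                rw [hww]
                refine Relation.ReflTransGen.tail ?_
                  (⟨i, α, t₂.word, hlen, rfl, rfl⟩ :
                    TagStep T (i :: (α ++ t₂.word)) (t₂.word ++ T.W i))
                rw [hw1] at hprod
                exact hprod
              · show Fml.subst τ (dot xhat (t₂.toFml xhat) (w.toFml xhat)) = B
                rw [subst_dot hx, h2]
                have hcw : Fml.subst τ (w.toFml xhat) = Fml.subst σ (w.toFml xhat) :=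
                  Fml.subst_congr fun k hk => by
                    have hk0 := fvars_toFml hx w hk
                    simp only [Finset.mem_singleton] at hk0
                    subst hk0
                    exact h0
                rw [hcw]
                exact eB
            · -- (T₂)
              injection hσ with eA eB
              rw [← eA] at hA
              rcases hA with hA | hA
              · obtain ⟨X, C, hc⟩ := toFml_circ (xhat := xhat) v
                rw [hc] at hA
                exact absurd hA (not_axinst_of_circ hx T P₀)
              · obtain ⟨G, ⟨t, rfl, hprod⟩, τ, hs⟩ := hA
                obtain ⟨hw1, h0⟩ := rigid hx t v τ σ hs
                refine Or.inr ⟨_, ⟨w, rfl, ?_⟩, σ, eB⟩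
                rw [hww]
                refine Relation.ReflTransGen.tail ?_
                  (⟨i, α, [], hlen, by simp, by simp⟩ :
                    TagStep T (i :: α) (T.W i))
                rw [hw1, hvw] at hprod
                exact hprod
          · -- (R₁)–(R₄)
            simp only [Raxioms, Set.mem_insert_iff, Set.mem_singleton_iff] at hF
            rcases hF with rfl | rfl | rfl | rfl
            · -- (R₁)
              injection hσ with eA eB
              simp only [subst_dot hx] at eA eB
              rw [← eA] at hA
              obtain ⟨t₁, t₂, τ, hprod, h1, h2⟩ := dot_decomp hx T P₀ ξ hA
              cases t₂ with
              | leaf a => exact absurd h2 (leaf_ne_dot hx a τ _ _)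
              | node a b =>
                  rw [ATree.toFml, subst_dot hx] at h2
                  obtain ⟨h2a, h2b⟩ := dot_inj hx h2
                  refine Or.inr ⟨_, ⟨ATree.node (ATree.node t₁ a) b, rfl, ?_⟩, τ, ?_⟩
                  · show TagProd T ξ ((t₁.word ++ a.word) ++ b.word)
                    simpa [ATree.word, List.append_assoc] using hprod
                  · show Fml.subst τ
                      (dot xhat (dot xhat (t₁.toFml xhat) (a.toFml xhat)) (b.toFml xhat)) = B
                    rw [subst_dot hx, subst_dot hx, h1, h2a, h2b]
                    exact eB
            · -- (R₂)
              injection hσ with eA eB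
              simp only [subst_dot hx] at eA eB
              rw [← eA] at hA
              obtain ⟨t₁, t₂, τ, hprod, h1, h2⟩ := dot_decomp hx T P₀ ξ hA
              cases t₁ with
              | leaf a => exact absurd h1 (leaf_ne_dot hx a τ _ _)
              | node a b =>
                  rw [ATree.toFml, subst_dot hx] at h1
                  obtain ⟨h1a, h1b⟩ := dot_inj hx h1
                  refine Or.inr ⟨_, ⟨ATree.node a (ATree.node b t₂), rfl, ?_⟩, τ, ?_⟩
                  · show TagProd T ξ (a.word ++ (b.word ++ t₂.word))
                    simpa [ATree.word, List.append_assoc] using hprod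
                  · show Fml.subst τ
                      (dot xhat (a.toFml xhat) (dot xhat (b.toFml xhat) (t₂.toFml xhat))) = B
                    rw [subst_dot hx, subst_dot hx, h1a, h1b, h2]
                    exact eB
            · -- (R₃)
              injection hσ with eA eB
              simp only [subst_dot hx] at eA eB
              rw [← eA] at hA
              obtain ⟨t₁, t₂, τ, hprod, h1, h2⟩ := dot_decomp hx T P₀ ξ hA
              cases t₁ with
              | leaf a => exact absurd h1 (leaf_ne_dot hx a τ _ _)
              | node a c =>
                  rw [ATree.toFml, subst_dot hx] at h1
                  obtain ⟨h1a, h1c⟩ := dot_inj hx h1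
                  cases c with
                  | leaf a' => exact absurd h1c (leaf_ne_dot hx a' τ _ _)
                  | node c₁ c₂ =>
                      rw [ATree.toFml, subst_dot hx] at h1c
                      obtain ⟨hc1, hc2⟩ := dot_inj hx h1c
                      refine Or.inr ⟨_,
                        ⟨ATree.node (ATree.node (ATree.node a c₁) c₂) t₂, rfl, ?_⟩, τ, ?_⟩
                      · show TagProd T ξ (((a.word ++ c₁.word) ++ c₂.word) ++ t₂.word)
                        simpa [ATree.word, List.append_assoc] using hprod
                      · show Fml.subst τ
                          (dot xhat (dot xhat (dot xhat (a.toFml xhat) (c₁.toFml xhat))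
                            (c₂.toFml xhat)) (t₂.toFml xhat)) = B
                        rw [subst_dot hx, subst_dot hx, subst_dot hx, h1a, hc1, hc2, h2]
                        exact eB
            · -- (R₄)
              injection hσ with eA eB
              simp only [subst_dot hx] at eA eB
              rw [← eA] at hA
              obtain ⟨t₁, t₂, τ, hprod, h1, h2⟩ := dot_decomp hx T P₀ ξ hA
              cases t₁ with
              | leaf a => exact absurd h1 (leaf_ne_dot hx a τ _ _)
              | node a c =>
                  rw [ATree.toFml, subst_dot hx] at h1
                  obtain ⟨h1a, h1c⟩ := dot_inj hx h1
                  cases a with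
                  | leaf a' => exact absurd h1a (leaf_ne_dot hx a' τ _ _)
                  | node a₁ a₂ =>
                      rw [ATree.toFml, subst_dot hx] at h1a
                      obtain ⟨ha1, ha2⟩ := dot_inj hx h1a
                      refine Or.inr ⟨_,
                        ⟨ATree.node (ATree.node a₁ (ATree.node a₂ c)) t₂, rfl, ?_⟩, τ, ?_⟩
                      · show TagProd T ξ ((a₁.word ++ (a₂.word ++ c.word)) ++ t₂.word)
                        simpa [ATree.word, List.append_assoc] using hprod
                      · show Fml.subst τ
                          (dot xhat (dot xhat (a₁.toFml xhat)
                            (dot xhat (a₂.toFml xhat) (c.toFml xhat))) (t₂.toFml xhat)) = B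
                        rw [subst_dot hx, subst_dot hx, subst_dot hx, ha1, ha2, h1c, h2]
                        exact eB
          · -- (H)
            obtain ⟨α, V, B₀, hne, hlt, hVc, hB₀, rfl⟩ := hF
            injection hσ with eA eB
            exact absurd ⟨α, hne, hlt, V, hVc, σ, by rw [eA]; exact hAn⟩ hshort
        · -- D an instance of a formula of T_ξ
          exfalso
          obtain ⟨G, ⟨t, rfl, hprod⟩, σ, hs⟩ := hD
          obtain ⟨X, C, hc⟩ := toFml_circ (xhat := xhat) t
          rw [hc, subst_circ hx] at hs
          simp only [circ] at hs
          injection hs with eA eB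
          rw [← eA] at hA
          exact bad_not_mem hx T P₀ ξ _ hA
      · -- substitution
        rcases IH' hAn with ⟨F, hF, τ, rfl⟩ | ⟨F, hF, τ, rfl⟩
        · exact Or.inl ⟨F, hF, _, (Fml.subst_subst σ τ F).symm⟩
        · exact Or.inr ⟨F, hF, _, (Fml.subst_subst σ τ F).symm⟩


end PC
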